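/- arXiv:2602.01175 — 3 statements merged into one kernel-verified Lean document; each statement's English description precedes it below -/
import Mathlib

section
/- Let Δt > 0 and let E, Ẽ, I be real numbers with E ≥ 0, Ẽ ≥ 0, I ≥ 0 and Ẽ + Δt·I > 0. Set ξ = E/(Ẽ + Δt·I) and E⁺ = ξ·Ẽ. Then 0 ≤ E⁺ ≤ E, and (E⁺ − E)/Δt = −ξ·I ≤ 0; that is, a single correction step of the scheme dissipates the energy. -/
/-- One-step energy dissipation of the correction step of Scheme I:
with `ξ = E/(Ẽ + Δt·I)` and `E⁺ = ξ·Ẽ`, we have `0 ≤ E⁺ ≤ E` and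
`(E⁺ − E)/Δt = −ξ·I ≤ 0`. -/
theorem stmt_1 (Δt E Et I : ℝ) (hΔt : 0 < Δt) (hE : 0 ≤ E) (hEt : 0 ≤ Et)
    (hI : 0 ≤ I) (hpos : 0 < Et + Δt * I) :
    let ξ := E / (Et + Δt * I)
    let Eplus := ξ * Et
    0 ≤ Eplus ∧ Eplus ≤ E ∧ (Eplus - E) / Δt = -(ξ * I) ∧ -(ξ * I) ≤ 0 := by
  intro ξ Eplus
  have hξ : 0 ≤ ξ := div_nonneg hE hpos.le
  have h1 : ξ * (Et + Δt * I) = E := div_mul_cancel₀ _ hpos.ne'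
  refine ⟨mul_nonneg hξ hEt, ?_, ?_, by nlinarith [mul_nonneg hξ hI]⟩
  · show ξ * Et ≤ E
    nlinarith [mul_nonneg (mul_nonneg hξ hΔt.le) hI]
  · show (ξ * Et - E) / Δt = -(ξ * I)
    field_simp
    nlinarith
end

section
/- Let Δt > 0 and let Ẽ, I : ℕ → ℝ be sequences with Ẽ(n+1) ≥ 0, I(n+1) ≥ 0 and Ẽ(n+1) + Δt·I(n+1) > 0 for all n. Define E : ℕ → ℝ by E(0) = e₀ ≥ 0 and, with ξ(n+1) = E(n)/(Ẽ(n+1) + Δt·I(n+1)), set E(n+1) = ξ(n+1)·Ẽ(n+1). Then for every k ≥ 0 the telescoping identity E(k+1) + Δt·∑_{n=0}^{k} ξ(n+1)·I(n+1) = E(0) holds; since every summand is nonnegative, in particular E(k+1) ≤ E(0) and Δt·∑_{n=0}^{k} ξ(n+1)·I(n+1) ≤ E(0). -/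
/-- Unconditional stability identity (3.9) of Theorem 3.1 for Scheme I in
abstract form: the telescoping identity
`E(k+1) + Δt·∑_{n=0}^{k} ξ(n+1)·I(n+1) = E(0)` holds, and in particular
`E(k+1) ≤ E(0)` and `Δt·∑_{n=0}^{k} ξ(n+1)·I(n+1) ≤ E(0)`. -/
theorem stmt_3 (Δt : ℝ) (hΔt : 0 < Δt) (Et I : ℕ → ℝ)
    (hEt : ∀ n : ℕ, 0 ≤ Et (n + 1)) (hI : ∀ n : ℕ, 0 ≤ I (n + 1))
    (hpos : ∀ n : ℕ, 0 < Et (n + 1) + Δt * I (n + 1))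
    (e₀ : ℝ) (he₀ : 0 ≤ e₀) (E : ℕ → ℝ) (hE0 : E 0 = e₀)
    (ξ : ℕ → ℝ) (hξ : ∀ n : ℕ, ξ (n + 1) = E n / (Et (n + 1) + Δt * I (n + 1)))
    (hE : ∀ n : ℕ, E (n + 1) = ξ (n + 1) * Et (n + 1)) :
    ∀ k : ℕ,
      E (k + 1) + Δt * ∑ n ∈ Finset.range (k + 1), ξ (n + 1) * I (n + 1) = E 0 ∧
      E (k + 1) ≤ E 0 ∧
      Δt * ∑ n ∈ Finset.range (k + 1), ξ (n + 1) * I (n + 1) ≤ E 0 := by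
  have hEnn : ∀ n : ℕ, 0 ≤ E n := by
    intro n
    induction n with
    | zero => rw [hE0]; exact he₀
    | succ m ih =>
      rw [hE m, hξ m]
      exact mul_nonneg (div_nonneg ih (hpos m).le) (hEt m)
  have hξnn : ∀ n : ℕ, 0 ≤ ξ (n + 1) := fun n => by
    rw [hξ n]; exact div_nonneg (hEnn n) (hpos n).le
  have hstep : ∀ n : ℕ, E (n + 1) + Δt * (ξ (n + 1) * I (n + 1)) = E n := by
    intro n
    have hD := (hpos n).ne'
    rw [hE n, hξ n]
    have : E n / (Et (n + 1) + Δt * I (n + 1)) * Et (n + 1) +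
        Δt * (E n / (Et (n + 1) + Δt * I (n + 1)) * I (n + 1)) =
        E n / (Et (n + 1) + Δt * I (n + 1)) * (Et (n + 1) + Δt * I (n + 1)) := by ring
    rw [this, div_mul_cancel₀ _ hD]
  have hmain : ∀ k : ℕ,
      E (k + 1) + Δt * ∑ n ∈ Finset.range (k + 1), ξ (n + 1) * I (n + 1) = E 0 := by
    intro k
    induction k with
    | zero => simpa using hstep 0
    | succ m ih =>
      rw [Finset.sum_range_succ, mul_add]
      have h1 := hstep (m + 1)
      linarith [ih]
  intro k
  have h := hmain k
  have hsum : 0 ≤ Δt * ∑ n ∈ Finset.range (k + 1), ξ (n + 1) * I (n + 1) :=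
    mul_nonneg hΔt.le (Finset.sum_nonneg fun n _ => mul_nonneg (hξnn n) (hI n))
  exact ⟨h, by linarith [hEnn (k + 1)], by linarith [hEnn (k + 1)]⟩
end

section
/- Let Δt > 0 and let E₀, Ẽ₁, I : ℕ → ℝ be sequences with E₀(n+1) ≥ 0, Ẽ₁(n+1) ≥ 0, I(n+1) ≥ 0 and Ẽ₁(n+1) + Δt·I(n+1) > 0 for all n. Define E : ℕ → ℝ by E(0) = e₀ ≥ 0 and, with ξ(n+1) = (E(n) − E₀(n+1))/(Ẽ₁(n+1) + Δt·I(n+1)), set E(n+1) = E₀(n+1) + ξ(n+1)·Ẽ₁(n+1). Suppose E(n) ≥ E₀(n+1) for all n ≤ k. Then ξ(n+1) ≥ 0 for all n ≤ k, the energy is nonincreasing on these steps, and E₀(k+1) + ξ(k+1)·Ẽ₁(k+1) + Δt·∑_{n=0}^{k} ξ(n+1)·I(n+1) = E(0); since every term on the left is nonnegative, in particular E₀(k+1) ≤ E(0) and ξ(k+1)·Ẽ₁(k+1) ≤ E(0). -/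
/-- Abstract sequence form of the stability bound (5.31) of Theorem 5.1 for
Scheme III: if `E(n) ≥ E₀(n+1)` for all `n ≤ k`, then the relaxation factors
are nonnegative, the energy is nonincreasing on these steps, the telescoping
identity `E₀(k+1) + ξ(k+1)·Ẽ₁(k+1) + Δt·∑_{n=0}^{k} ξ(n+1)·I(n+1) = E(0)`
holds, and in particular `E₀(k+1) ≤ E(0)` and `ξ(k+1)·Ẽ₁(k+1) ≤ E(0)`. -/
theorem stmt_6 (Δt : ℝ) (hΔt : 0 < Δt) (E₀ Et₁ I : ℕ → ℝ)
    (hE₀ : ∀ n : ℕ, 0 ≤ E₀ (n + 1)) (hEt₁ : ∀ n : ℕ, 0 ≤ Et₁ (n + 1))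
    (hI : ∀ n : ℕ, 0 ≤ I (n + 1))
    (hpos : ∀ n : ℕ, 0 < Et₁ (n + 1) + Δt * I (n + 1))
    (e₀ : ℝ) (he₀ : 0 ≤ e₀) (E : ℕ → ℝ) (hE0 : E 0 = e₀)
    (ξ : ℕ → ℝ)
    (hξ : ∀ n : ℕ, ξ (n + 1) = (E n - E₀ (n + 1)) / (Et₁ (n + 1) + Δt * I (n + 1)))
    (hE : ∀ n : ℕ, E (n + 1) = E₀ (n + 1) + ξ (n + 1) * Et₁ (n + 1))
    (k : ℕ) (hmono : ∀ n : ℕ, n ≤ k → E₀ (n + 1) ≤ E n) :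
    (∀ n : ℕ, n ≤ k → 0 ≤ ξ (n + 1)) ∧
    (∀ n : ℕ, n ≤ k → E (n + 1) ≤ E n) ∧
    E₀ (k + 1) + ξ (k + 1) * Et₁ (k + 1) +
        Δt * ∑ n ∈ Finset.range (k + 1), ξ (n + 1) * I (n + 1) = E 0 ∧
    E₀ (k + 1) ≤ E 0 ∧ ξ (k + 1) * Et₁ (k + 1) ≤ E 0 := by
  have hξn : ∀ n : ℕ, n ≤ k → 0 ≤ ξ (n + 1) := fun n hn => by
    rw [hξ n]
    exact div_nonneg (by linarith [hmono n hn]) (hpos n).le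
  have hstep : ∀ n : ℕ, E (n + 1) + Δt * (ξ (n + 1) * I (n + 1)) = E n := by
    intro n
    have h := hξ n
    have hne := (hpos n).ne'
    field_simp at h
    rw [hE n]; linarith
  have hsum : ∀ m : ℕ, E m + Δt * ∑ n ∈ Finset.range m, ξ (n + 1) * I (n + 1) = E 0 := by
    intro m
    induction m with
    | zero => simp
    | succ m ih =>
      rw [Finset.sum_range_succ]
      rw [← ih]
      linarith [hstep m]
  have key : E₀ (k + 1) + ξ (k + 1) * Et₁ (k + 1) +
      Δt * ∑ n ∈ Finset.range (k + 1), ξ (n + 1) * I (n + 1) = E 0 := by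
    rw [← hE k]; exact hsum (k + 1)
  have hsumnn : 0 ≤ ∑ n ∈ Finset.range (k + 1), ξ (n + 1) * I (n + 1) :=
    Finset.sum_nonneg fun n hn =>
      mul_nonneg (hξn n (Nat.lt_succ_iff.mp (Finset.mem_range.mp hn))) (hI n)
  refine ⟨hξn, fun n hn => ?_, key, ?_, ?_⟩
  · have := hstep n
    nlinarith [mul_nonneg hΔt.le (mul_nonneg (hξn n hn) (hI n))]
  · nlinarith [mul_nonneg (hξn k le_rfl) (hEt₁ k)]
  · nlinarith [hE₀ k]
end
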